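/- arXiv:1805.08895 — 3 statements merged into one kernel-verified Lean document; each statement's English description precedes it below -/
import Mathlib

section
/- For integers 0 ≤ s < t < p ≤ n, the following Gaussian binomial identity holds in ℤ[q]: binom(p-s-1, t-s)_q · [ binom(n-s, p-s)_q - q^{p-s} · binom(n-s-1, p-s)_q ] = [ q^{t-s} · binom(p-s-2, t-s)_q + binom(p-s-2, t-s-1)_q ] · binom(n-s-1, p-s-1)_q. -/
open Polynomial Finset

/-- The Gaussian binomial coefficient as a polynomial in `ℤ[q]`,
defined via the q-Pascal recursion; it is `0` when `b > a`. -/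
noncomputable def qbinom : ℕ → ℕ → Polynomial ℤ
  | _, 0 => 1
  | 0, _ + 1 => 0
  | a + 1, b + 1 => X ^ (b + 1) * qbinom a (b + 1) + qbinom a b

lemma qbinom_succ_succ (a b : ℕ) :
    qbinom (a + 1) (b + 1) = X ^ (b + 1) * qbinom a (b + 1) + qbinom a b := by
  rw [qbinom]

/-- The Gaussian binomial identity (eq:id-msq-bins) in the case s < t. -/
theorem qbinom_identity_s_lt_t (n p t s : ℕ) (hs : s < t) (ht : t < p) (hp : p ≤ n) :
    qbinom (p - s - 1) (t - s) *
        (qbinom (n - s) (p - s) - X ^ (p - s) * qbinom (n - s - 1) (p - s)) =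
      (X ^ (t - s) * qbinom (p - s - 2) (t - s) + qbinom (p - s - 2) (t - s - 1)) *
        qbinom (n - s - 1) (p - s - 1) := by
  obtain ⟨T, hT⟩ := Nat.exists_eq_add_of_lt hs
  obtain ⟨K, hK⟩ := Nat.exists_eq_add_of_lt ht
  obtain ⟨M, hM⟩ := Nat.exists_eq_add_of_le hp
  subst hT hK hM
  have e1 : s + T + 1 - s = T + 1 := by omega
  have e2 : s + T + 1 + K + 1 - s = T + K + 2 := by omega
  have e3 : s + T + 1 + K + 1 - s - 1 = T + K + 1 := by omega
  have e4 : s + T + 1 + K + 1 - s - 2 = T + K := by omega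
  have e5 : s + T + 1 + K + 1 + M - s = T + K + M + 2 := by omega
  have e6 : s + T + 1 + K + 1 + M - s - 1 = T + K + M + 1 := by omega
  have e7 : s + T + 1 - s - 1 = T := by omega
  simp only [e1, e2, e5]
  rw [show T + K + M + 2 - 1 = T + K + M + 1 from rfl,
    show T + K + 2 - 1 = T + K + 1 from rfl, show T + K + 2 - 2 = T + K from rfl,
    show T + 1 - 1 = T from rfl]
  rw [show T + K + M + 2 = (T + K + M + 1) + 1 from rfl,
    show T + K + 2 = (T + K + 1) + 1 from rfl, qbinom_succ_succ,
    show T + K + 1 = (T + K) + 1 from rfl, qbinom_succ_succ]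
  ring
end

section
/- For integers n ≥ 1 and 0 ≤ t < p ≤ n, define χ(s) = (-1)^{(s-t)} for s in range; then the sequence a_p := (-1)^{p-t}·C(n,p)·C(p-1,t) satisfies the recurrence ∑_{s=t+1}^{p} a_s · C(n-1-s, p-s) = (-1)^{p-t}·C(n-1,t) - C(n-1,p) for all p > t, and moreover this recurrence determines a_{t+1}, a_{t+2}, ..., a_n uniquely. -/
open Polynomial Finset

/-! Write a_s = (-1)^(s-t) C(n,s) C(s-1,t). Trinomial revision C(n,s) C(n-s,p-s) = C(n,p) C(p,s)
gives Σ_s a_s C(n-s,p-s) = C(n,p) · Σ_s a_s|_{n=p} = -C(n,p), the inner sum being -1 by Pascal's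
rule in p together with Σ_r (-1)^r C(p,r) C(r,t) = 0 for t < p. Pascal's rule
C(n-s,p-s) = C(n-1-s,p-s) + C(n-1-s,p-1-s) then says that the left sides of the recurrence at p
and p-1 add up to -C(n,p) = -C(n-1,p) - C(n-1,p-1), as the right sides do, and both vanish at
p = t. Uniqueness holds because the system is unitriangular. -/

theorem Int.sum_Icc_alternating_choose_mul_choose {t p : ℕ} (h : t < p) :
    ∑ r ∈ Icc t p, (-1 : ℤ) ^ (r - t) * p.choose r * r.choose t = 0 := by
  have hrevision (k : ℕ) : (-1 : ℤ) ^ (t + k - t) * p.choose (t + k) * (t + k).choose t =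
      p.choose t * ((-1) ^ k * (p - t).choose k) := by
    rw [Nat.add_sub_cancel_left, mul_assoc, ← Nat.cast_mul, Nat.choose_mul (Nat.le_add_right t k),
      Nat.add_sub_cancel_left]
    push_cast
    ring
  rw [← Ico_add_one_right_eq_Icc, sum_Ico_eq_sum_range, Nat.sub_add_comm h.le]
  simp only [hrevision, ← mul_sum, Int.alternating_sum_range_choose_of_ne (Nat.sub_ne_zero_of_lt h),
    mul_zero]

-- the a_p of the statement, i.e. the Euler characteristic χ₀(H_t(D_p)) of the paper
def eulerChar (n t p : ℕ) : ℤ := (-1) ^ (p - t) * n.choose p * (p - 1).choose t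

theorem sum_eulerChar_succ {t p : ℕ} (htp : t ≤ p) :
    ∑ s ∈ Icc (t + 1) (p + 1), eulerChar (p + 1) t s =
      ∑ s ∈ Icc (t + 1) p, eulerChar p t s -
        ∑ r ∈ Icc t p, (-1 : ℤ) ^ (r - t) * p.choose r * r.choose t := by
  have hpascal (r : ℕ) (hr : t ≤ r) : eulerChar (p + 1) t (r + 1) =
      eulerChar p t (r + 1) - (-1 : ℤ) ^ (r - t) * p.choose r * r.choose t := by
    rw [eulerChar, eulerChar, Nat.choose_succ_succ', Nat.add_sub_cancel, Nat.sub_add_comm hr,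
      pow_succ]
    push_cast
    ring
  have hshift (f : ℕ → ℤ) : ∑ s ∈ Icc (t + 1) (p + 1), f s = ∑ r ∈ Icc t p, f (r + 1) := by
    rw [← map_add_right_Icc, sum_map]
    rfl
  have htop : eulerChar p t (p + 1) = 0 := by simp [eulerChar]
  rw [hshift, sum_congr rfl fun r hr ↦ hpascal r (mem_Icc.1 hr).1, sum_sub_distrib, ← hshift,
    sum_Icc_succ_top (by omega), htop, add_zero]

theorem sum_eulerChar_self {t p : ℕ} (h : t < p) : ∑ s ∈ Icc (t + 1) p, eulerChar p t s = -1 := by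
  induction p, h using Nat.le_induction with
  | base => simp [eulerChar]
  | succ p hp ih =>
    rw [sum_eulerChar_succ (by omega), ih, Int.sum_Icc_alternating_choose_mul_choose hp, sub_zero]

theorem eulerChar_mul_choose {n t p s : ℕ} (hsp : s ≤ p) :
    eulerChar n t s * (n - s).choose (p - s) = n.choose p * eulerChar p t s := by
  have hrevision : (n.choose p * p.choose s : ℤ) = n.choose s * (n - s).choose (p - s) := by
    exact_mod_cast Nat.choose_mul hsp
  rw [eulerChar, eulerChar]
  linear_combination -(-1 : ℤ) ^ (s - t) * (s - 1).choose t * hrevision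

theorem sum_eulerChar_mul_choose {n t p : ℕ} (h : t < p) :
    ∑ s ∈ Icc (t + 1) p, eulerChar n t s * (n - s).choose (p - s) = -n.choose p := by
  rw [sum_congr rfl fun s hs ↦ eulerChar_mul_choose (mem_Icc.1 hs).2, ← mul_sum,
    sum_eulerChar_self h, mul_neg_one]

theorem sum_mul_choose_sub_succ_eq_add {R : Type*} [Semiring R] (f : ℕ → R) {a n p : ℕ}
    (ha : a ≤ p + 1) (hpn : p < n) :
    ∑ s ∈ Icc a (p + 1), f s * (n - s).choose (p + 1 - s) =
      ∑ s ∈ Icc a (p + 1), f s * (n - 1 - s).choose (p + 1 - s) +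
        ∑ s ∈ Icc a p, f s * (n - 1 - s).choose (p - s) := by
  have hpascal (s : ℕ) (hs : s ≤ p) : f s * (n - s).choose (p + 1 - s) =
      f s * (n - 1 - s).choose (p + 1 - s) + f s * (n - 1 - s).choose (p - s) := by
    rw [show n - s = n - 1 - s + 1 by omega, show p + 1 - s = p - s + 1 by omega,
      Nat.choose_succ_succ', Nat.cast_add, mul_add, add_comm]
  -- the top term s = p + 1 is split off: Pascal's rule fails there, as p - s truncates to 0
  rw [sum_Icc_succ_top ha, sum_Icc_succ_top ha,
    sum_congr rfl fun s hs ↦ hpascal s (mem_Icc.1 hs).2, sum_add_distrib]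
  simp only [Nat.sub_self, Nat.choose_zero_right]
  abel

theorem sum_eulerChar_mul_choose_pred {n t p : ℕ} (htp : t ≤ p) (hpn : p ≤ n) :
    ∑ s ∈ Icc (t + 1) p, eulerChar n t s * (n - 1 - s).choose (p - s) =
      (-1) ^ (p - t) * (n - 1).choose t - (n - 1).choose p := by
  induction p, htp using Nat.le_induction with
  | base => simp
  | succ p htp ih =>
    have hpascal : (n.choose (p + 1) : ℤ) = (n - 1).choose p + (n - 1).choose (p + 1) := by
      exact_mod_cast Nat.choose_succ_right n p (by omega)
    have hsum := sum_mul_choose_sub_succ_eq_add (eulerChar n t) (by omega : t + 1 ≤ p + 1) hpn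
    rw [sum_eulerChar_mul_choose (by omega), ih (by omega), hpascal] at hsum
    rw [Nat.sub_add_comm htp, pow_succ]
    linear_combination -hsum

theorem eq_of_forall_sum_Icc_mul_eq {R : Type*} [Ring R] {a b : ℕ → R} {c : ℕ → ℕ → R}
    {t n : ℕ} (hc : ∀ p, c p p = 1)
    (h : ∀ p, t < p → p ≤ n → ∑ s ∈ Icc (t + 1) p, a s * c s p = ∑ s ∈ Icc (t + 1) p, b s * c s p) :
    ∀ p, t < p → p ≤ n → a p = b p := by
  intro p
  induction p using Nat.strong_induction_on with
  | _ p ih =>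
    intro htp hpn
    obtain ⟨q, rfl⟩ : ∃ q, p = q + 1 := ⟨p - 1, by omega⟩
    have hq := h (q + 1) htp hpn
    have hbelow : ∀ s ∈ Icc (t + 1) q, a s * c s (q + 1) = b s * c s (q + 1) := fun s hs ↦ by
      rw [ih s (by grind) (by grind) (by grind)]
    rw [sum_Icc_succ_top htp, sum_Icc_succ_top htp, sum_congr rfl hbelow, hc, mul_one, mul_one]
      at hq
    exact add_left_cancel hq

theorem euler_char_recurrence_unique_general (n t : ℕ) :
    (∀ p, t < p → p ≤ n →
      ∑ s ∈ Finset.Icc (t + 1) p,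
          ((-1 : ℤ) ^ (s - t) * (n.choose s) * ((s - 1).choose t)) * ((n - 1 - s).choose (p - s)) =
        (-1 : ℤ) ^ (p - t) * ((n - 1).choose t) - ((n - 1).choose p)) ∧
    (∀ b : ℕ → ℤ,
      (∀ p, t < p → p ≤ n →
        ∑ s ∈ Finset.Icc (t + 1) p, b s * ((n - 1 - s).choose (p - s)) =
          (-1 : ℤ) ^ (p - t) * ((n - 1).choose t) - ((n - 1).choose p)) →
      ∀ p, t < p → p ≤ n →
        b p = (-1 : ℤ) ^ (p - t) * (n.choose p) * ((p - 1).choose t)) := by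
  have hsolution (p : ℕ) (htp : t < p) (hpn : p ≤ n) :=
    sum_eulerChar_mul_choose_pred (n := n) htp.le hpn
  refine ⟨hsolution, fun b hb ↦ ?_⟩
  refine eq_of_forall_sum_Icc_mul_eq (c := fun s p ↦ ((n - 1 - s).choose (p - s) : ℤ)) (by simp) ?_
  exact fun p htp hpn ↦ (hb p htp hpn).trans (hsolution p htp hpn).symm

/-- The sequence a_p = (-1)^{p-t}·C(n,p)·C(p-1,t) satisfies the recurrence of Lemma 3.2,
and the recurrence determines it uniquely. -/
theorem euler_char_recurrence_unique (n t : ℕ) (hn : 1 ≤ n) (ht : t < n) :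
    (∀ p, t < p → p ≤ n →
      ∑ s ∈ Finset.Icc (t + 1) p,
          ((-1 : ℤ) ^ (s - t) * (n.choose s) * ((s - 1).choose t)) * ((n - 1 - s).choose (p - s)) =
        (-1 : ℤ) ^ (p - t) * ((n - 1).choose t) - ((n - 1).choose p)) ∧
    (∀ b : ℕ → ℤ,
      (∀ p, t < p → p ≤ n →
        ∑ s ∈ Finset.Icc (t + 1) p, b s * ((n - 1 - s).choose (p - s)) =
          (-1 : ℤ) ^ (p - t) * ((n - 1).choose t) - ((n - 1).choose p)) →
      ∀ p, t < p → p ≤ n →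
        b p = (-1 : ℤ) ^ (p - t) * (n.choose p) * ((p - 1).choose t)) :=
  euler_char_recurrence_unique_general n t
end

section
/- For every integer n ≥ 1 and 0 ≤ t < p ≤ n, define m_t(q) = binom(n-t, p-t)_q and, for 0 ≤ s < t, m_s(q) = binom(n-s,p-s)_q · binom(p-1-s,t-s)_q − binom(n-s-1,p-s-1)_q · binom(p-2-s,t-1-s)_q. Then each m_s(q) has nonnegative integer coefficients. -/
open Polynomial Finset

lemma qbinom_coeff_nonneg : ∀ a b k, 0 ≤ (qbinom a b).coeff k := by
  intro a
  induction a with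
  | zero =>
    intro b k
    cases b with
    | zero => simp [qbinom, Polynomial.coeff_one]; split <;> norm_num
    | succ b => simp [qbinom]
  | succ a ih =>
    intro b k
    cases b with
    | zero => simp [qbinom, Polynomial.coeff_one]; split <;> norm_num
    | succ b =>
      rw [qbinom, Polynomial.coeff_add]
      refine add_nonneg ?_ (ih _ _)
      rw [Polynomial.coeff_mul]
      refine Finset.sum_nonneg fun x _ => mul_nonneg ?_ (ih _ _)
      rw [Polynomial.coeff_X_pow]
      split <;> norm_num

lemma qbinom_key (a b u : ℕ) :
    qbinom (a+1) (b+2) * qbinom (b+1) (u+1) - qbinom a (b+1) * qbinom b u =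
      X^(b+2) * qbinom a (b+2) * qbinom (b+1) (u+1) +
        X^(u+1) * qbinom a (b+1) * qbinom b (u+1) := by
  rw [show qbinom (a+1) (b+2) = X^(b+2) * qbinom a (b+2) + qbinom a (b+1) from rfl]
  rw [show qbinom (b+1) (u+1) = X^(u+1) * qbinom b (u+1) + qbinom b u from rfl]
  ring

/-- The multiplicity polynomials m_s(q) of Theorem 6.1 have nonnegative coefficients. -/
theorem multiplicity_nonneg (n p t : ℕ) (hn : 1 ≤ n) (ht : t < p) (hp : p ≤ n)
    (s : ℕ) (hs : s ≤ t) (k : ℕ) :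
    0 ≤ (if s = t then qbinom (n - t) (p - t)
         else qbinom (n - s) (p - s) * qbinom (p - 1 - s) (t - s) -
           qbinom (n - s - 1) (p - s - 1) * qbinom (p - 2 - s) (t - 1 - s)).coeff k := by
  split
  · exact qbinom_coeff_nonneg _ _ _
  · rename_i hne
    have hst : s < t := lt_of_le_of_ne hs hne
    have h1 : n - s = (n - s - 1) + 1 := by omega
    have h2 : p - s = (p - 2 - s) + 2 := by omega
    have h3 : p - 1 - s = (p - 2 - s) + 1 := by omega
    have h4 : t - s = (t - 1 - s) + 1 := by omega
    have h5 : p - s - 1 = (p - 2 - s) + 1 := by omega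
    rw [h1, h2, h3, h4]
    have h6 : n - s - 1 + 1 - 1 = n - s - 1 := by omega
    have h7 : p - 2 - s + 2 - 1 = p - 2 - s + 1 := by omega
    rw [h6, h7, qbinom_key, Polynomial.coeff_add]
    refine add_nonneg ?_ ?_ <;>
    · rw [Polynomial.coeff_mul]
      refine Finset.sum_nonneg fun x _ => mul_nonneg ?_ (qbinom_coeff_nonneg _ _ _)
      rw [Polynomial.coeff_mul]
      refine Finset.sum_nonneg fun y _ => mul_nonneg ?_ (qbinom_coeff_nonneg _ _ _)
      rw [Polynomial.coeff_X_pow]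
      split <;> norm_num
end
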